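/- In the degenerating setup, assume in addition that q_{d₁+1}, …, q_e are pairwise distinct and none of them equals 1. Fix k with d₁ < k ≤ e and write q = q_k. Let l ≥ 1 be an integer such that B^j(q) ∉ {q_{d₁+1}, …, q_e} for every 1 ≤ j ≤ l − 1 (the iterates are defined since B maps ∂𝔻 into ∂𝔻). If (c_n) is a sequence in 𝔻 with B_n'(c_n) = 0 for all n and c_n → q, then B_n^l(c_n) → B^l(q) as n → ∞, where B_n^l and B^l denote l-fold iterates. -/

import Mathlib

/-
Off the zeros, a critical point `c` of `B_n` is a zero of the logarithmic derivative:
`m / c + ∑ⱼ Tⱼ = 0` with `Tⱼ = (1 - |aⱼ|²) / ((c - aⱼ)(1 - āⱼ c))`. The points `c_n → q_k` are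
eventually off the zeros: the zeros `a_{n,j}`, `j ≠ k`, converge away from `q_k`, and `a_{n,k}` is
a simple zero, hence not critical. Every `Tⱼ` with `j ≠ k` converges, hence so does `T_k`. Since
`(1 - āc) / (c - a) = T (1 - āc) - ā` and `1 - ā_{n,k} c_n → 1 - |q_k|² = 0`, the `k`-th Blaschke
factor at `c_n` tends to `((1 - q̄_k) / (1 - q_k)) / (-q̄_k) = 1`. The other factors converge, those
of the boundary zeros `q_j ≠ q_k` to `1`, so `B_n(c_n) → B(q_k)`; the later iterates follow by
continuity, as the orbit of `q_k` stays on the circle and avoids the boundary zeros.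
-/

open Filter

noncomputable def blaschke (m : ℕ) {e : ℕ} (a : Fin e → ℂ) (z : ℂ) : ℂ :=
  z ^ m * ∏ k, ((1 - (starRingEnd ℂ) (a k)) / (1 - a k) *
    ((z - a k) / (1 - (starRingEnd ℂ) (a k) * z)))

open Topology ComplexConjugate Finset

noncomputable def blaschkeFactor (a z : ℂ) : ℂ :=
  (1 - conj a) / (1 - a) * ((z - a) / (1 - conj a * z))

noncomputable def blaschkeFactorLogDeriv (a z : ℂ) : ℂ :=
  (1 - conj a * a) / ((z - a) * (1 - conj a * z))

lemma blaschke_eq_mul_prod (m : ℕ) {e : ℕ} (a : Fin e → ℂ) (z : ℂ) :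
    blaschke m a z = z ^ m * ∏ k, blaschkeFactor (a k) z := rfl

lemma one_sub_conj_div_one_sub_ne_zero {a : ℂ} (ha : ‖a‖ < 1) : (1 - conj a) / (1 - a) ≠ 0 :=
  div_ne_zero (isUnit_one_sub_of_norm_lt_one (by rwa [RCLike.norm_conj])).ne_zero
    (isUnit_one_sub_of_norm_lt_one ha).ne_zero

lemma one_sub_conj_mul_ne_zero_of_norm_lt_one {a z : ℂ} (ha : ‖a‖ < 1) (hz : ‖z‖ ≤ 1) :
    1 - conj a * z ≠ 0 :=
  (isUnit_one_sub_of_norm_lt_one <| by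
    rw [norm_mul, RCLike.norm_conj]
    nlinarith [norm_nonneg a, norm_nonneg z]).ne_zero

lemma one_sub_conj_mul_ne_zero_of_norm_eq_one {α z : ℂ} (hα : ‖α‖ = 1) (hz : z ≠ α) :
    1 - conj α * z ≠ 0 := by
  intro h
  apply hz
  calc z = conj α * α * z := by rw [Complex.conj_mul', hα]; simp
    _ = (1 - (1 - conj α * z)) * α := by ring
    _ = α := by rw [h]; ring

lemma one_sub_conj_mul_ne_zero {a z : ℂ} (ha : ‖a‖ ≤ 1) (hz : ‖z‖ ≤ 1) (hza : z ≠ a) :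
    1 - conj a * z ≠ 0 := by
  rcases ha.lt_or_eq with ha | ha
  · exact one_sub_conj_mul_ne_zero_of_norm_lt_one ha hz
  · exact one_sub_conj_mul_ne_zero_of_norm_eq_one ha hza

lemma blaschkeFactor_ne_zero {a z : ℂ} (ha : ‖a‖ < 1) (hza : z ≠ a)
    (hz : 1 - conj a * z ≠ 0) : blaschkeFactor a z ≠ 0 :=
  mul_ne_zero (one_sub_conj_div_one_sub_ne_zero ha) (div_ne_zero (sub_ne_zero.2 hza) hz)

lemma blaschkeFactor_eq_one {α z : ℂ} (hα : ‖α‖ = 1) (hα1 : α ≠ 1) (hz : z ≠ α) :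
    blaschkeFactor α z = 1 := by
  have hαα : conj α * α = 1 := by rw [Complex.conj_mul', hα]; simp
  have h1 : (1 : ℂ) - α ≠ 0 := sub_ne_zero.2 hα1.symm
  have h2 := one_sub_conj_mul_ne_zero_of_norm_eq_one hα hz
  rw [blaschkeFactor]
  field_simp
  linear_combination (1 - z) * hαα

lemma norm_blaschkeFactor_of_norm_eq_one {a w : ℂ} (ha : ‖a‖ < 1) (hw : ‖w‖ = 1) :
    ‖blaschkeFactor a w‖ = 1 := by
  have hwa : w - a ≠ 0 := sub_ne_zero.2 fun h => by rw [h] at hw; linarith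
  have hnum : ‖(1 : ℂ) - conj a‖ = ‖1 - a‖ := by
    rw [← RCLike.norm_conj, map_sub, map_one, Complex.conj_conj]
  have hden : ‖1 - conj a * w‖ = ‖w - a‖ := by
    have hww : w * conj w = 1 := by rw [Complex.mul_conj', hw]; simp
    rw [show 1 - conj a * w = w * conj (w - a) by rw [map_sub]; linear_combination -hww,
      norm_mul, hw, one_mul, RCLike.norm_conj]
  rw [blaschkeFactor, norm_mul, norm_div, norm_div, hnum, hden,
    div_self (norm_ne_zero_iff.2 (isUnit_one_sub_of_norm_lt_one ha).ne_zero),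
    div_self (norm_ne_zero_iff.2 hwa), one_mul]

lemma mapsTo_blaschke_sphere (m : ℕ) {e : ℕ} {a : Fin e → ℂ} (ha : ∀ j, ‖a j‖ < 1) :
    Set.MapsTo (blaschke m a) (Metric.sphere 0 1) (Metric.sphere 0 1) := by
  intro w hw
  rw [mem_sphere_zero_iff_norm] at hw ⊢
  rw [blaschke_eq_mul_prod, norm_mul, norm_pow, hw, one_pow, one_mul, norm_prod,
    prod_congr rfl fun j _ => norm_blaschkeFactor_of_norm_eq_one (ha j) hw, prod_const_one]

section Limits

variable {ι : Type*} {L : Filter ι} {a z : ι → ℂ} {α w : ℂ}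

lemma Filter.Tendsto.blaschkeFactor (ha : Tendsto a L (𝓝 α)) (hz : Tendsto z L (𝓝 w))
    (h1 : 1 - α ≠ 0) (h2 : 1 - conj α * w ≠ 0) :
    Tendsto (fun n => blaschkeFactor (a n) (z n)) L (𝓝 (blaschkeFactor α w)) :=
  have hconj := (Complex.continuous_conj.tendsto α).comp ha
  ((tendsto_const_nhds.sub hconj).div (tendsto_const_nhds.sub ha) h1).mul
    ((hz.sub ha).div (tendsto_const_nhds.sub (hconj.mul hz)) h2)

lemma Filter.Tendsto.blaschkeFactorLogDeriv (ha : Tendsto a L (𝓝 α))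
    (hz : Tendsto z L (𝓝 w)) (h1 : w - α ≠ 0) (h2 : 1 - conj α * w ≠ 0) :
    Tendsto (fun n => blaschkeFactorLogDeriv (a n) (z n)) L (𝓝 (blaschkeFactorLogDeriv α w)) :=
  have hconj := (Complex.continuous_conj.tendsto α).comp ha
  (tendsto_const_nhds.sub (hconj.mul ha)).div
    ((hz.sub ha).mul (tendsto_const_nhds.sub (hconj.mul hz))) (mul_ne_zero h1 h2)

end Limits

lemma hasDerivAt_blaschkeFactor {a z : ℂ} (hz : 1 - conj a * z ≠ 0) :
    HasDerivAt (blaschkeFactor a)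
      ((1 - conj a) / (1 - a) * ((1 - conj a * a) / (1 - conj a * z) ^ 2)) z := by
  have h := (((hasDerivAt_id' z).sub_const a).fun_div
    (((hasDerivAt_id' z).const_mul (conj a)).const_sub 1) hz).const_mul ((1 - conj a) / (1 - a))
  exact h.congr_deriv (by ring)

lemma logDeriv_blaschkeFactor {a z : ℂ} (ha : ‖a‖ < 1) (hza : z ≠ a)
    (hz : 1 - conj a * z ≠ 0) : logDeriv (blaschkeFactor a) z = blaschkeFactorLogDeriv a z := by
  have hu := one_sub_conj_div_one_sub_ne_zero ha
  have hza' : z - a ≠ 0 := sub_ne_zero.2 hza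
  rw [logDeriv_apply, (hasDerivAt_blaschkeFactor hz).deriv, blaschkeFactor,
    mul_div_mul_left _ _ hu, blaschkeFactorLogDeriv]
  field_simp

lemma logDeriv_blaschke (m : ℕ) {e : ℕ} {a : Fin e → ℂ} {c : ℂ} (ha : ∀ j, ‖a j‖ < 1)
    (hc : c ≠ 0) (hca : ∀ j, c ≠ a j) (hden : ∀ j, 1 - conj (a j) * c ≠ 0) :
    logDeriv (blaschke m a) c = m / c + ∑ j, blaschkeFactorLogDeriv (a j) c := by
  have hdiff : ∀ j ∈ univ, DifferentiableAt ℂ (blaschkeFactor (a j)) c :=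
    fun j _ => (hasDerivAt_blaschkeFactor (hden j)).differentiableAt
  have hne : ∀ j ∈ univ, blaschkeFactor (a j) c ≠ 0 :=
    fun j _ => blaschkeFactor_ne_zero (ha j) (hca j) (hden j)
  rw [show blaschke m a = fun z => z ^ m * ∏ j, blaschkeFactor (a j) z from rfl,
    logDeriv_mul (f := (· ^ m)) c (pow_ne_zero m hc) (prod_ne_zero_iff.2 hne)
      (differentiableAt_pow m) (DifferentiableAt.fun_finsetProd hdiff),
    logDeriv_pow, logDeriv_prod hne hdiff]
  exact congrArg _ (sum_congr rfl fun j _ => logDeriv_blaschkeFactor (ha j) (hca j) (hden j))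

lemma blaschke_critical_point_eq {m e : ℕ} {a : Fin e → ℂ} {c : ℂ} (ha : ∀ j, ‖a j‖ < 1)
    (hc : ‖c‖ < 1) (hc0 : c ≠ 0) (hca : ∀ j, c ≠ a j) (hcrit : deriv (blaschke m a) c = 0) :
    m / c + ∑ j, blaschkeFactorLogDeriv (a j) c = 0 := by
  rw [← logDeriv_blaschke m ha hc0 hca
    (fun j => one_sub_conj_mul_ne_zero_of_norm_lt_one (ha j) hc.le), logDeriv_apply, hcrit,
    zero_div]

lemma deriv_blaschke_ne_zero_of_simple_zero (m : ℕ) {e : ℕ} {a : Fin e → ℂ}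
    (ha : ∀ j, ‖a j‖ < 1) {k : Fin e} (hk : a k ≠ 0) (hsimple : ∀ j ≠ k, a k ≠ a j) :
    deriv (blaschke m a) (a k) ≠ 0 := by
  have hden : ∀ j, 1 - conj (a j) * a k ≠ 0 :=
    fun j => one_sub_conj_mul_ne_zero_of_norm_lt_one (ha j) (ha k).le
  set R : ℂ → ℂ := fun z => z ^ m * ∏ j ∈ univ.erase k, blaschkeFactor (a j) z
  have hsplit : blaschke m a = fun z => blaschkeFactor (a k) z * R z := by
    ext z
    rw [blaschke_eq_mul_prod, ← mul_prod_erase univ _ (mem_univ k)]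
    ring
  have hR : DifferentiableAt ℂ R (a k) :=
    (differentiableAt_pow m).mul (DifferentiableAt.fun_finsetProd fun j _ =>
      (hasDerivAt_blaschkeFactor (hden j)).differentiableAt)
  have hzero : blaschkeFactor (a k) (a k) = 0 := by simp [blaschkeFactor]
  rw [hsplit, ((hasDerivAt_blaschkeFactor (hden k)).fun_mul hR.hasDerivAt).deriv, hzero, zero_mul,
    add_zero]
  refine mul_ne_zero (mul_ne_zero (one_sub_conj_div_one_sub_ne_zero (ha k))
    (div_ne_zero (hden k) (pow_ne_zero 2 (hden k)))) (mul_ne_zero (pow_ne_zero m hk) ?_)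
  exact prod_ne_zero_iff.2 fun j hj =>
    blaschkeFactor_ne_zero (ha j) (hsimple j (ne_of_mem_erase hj)) (hden j)

lemma blaschkeFactor_eq_div_logDeriv {a c : ℂ} (hca : c ≠ a) (hden : 1 - conj a * c ≠ 0) :
    blaschkeFactor a c = (1 - conj a) / (1 - a) /
      (blaschkeFactorLogDeriv a c * (1 - conj a * c) - conj a) := by
  have h : c - a ≠ 0 := sub_ne_zero.2 hca
  have hT : blaschkeFactorLogDeriv a c * (1 - conj a * c) - conj a = (1 - conj a * c) / (c - a) := by
    rw [blaschkeFactorLogDeriv]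
    field_simp
    ring
  rw [hT, blaschkeFactor, div_div_eq_mul_div, mul_div_assoc]

lemma tendsto_blaschkeFactor_one_of_tendsto_logDeriv {ι : Type*} {L : Filter ι}
    {a c : ι → ℂ} {α t : ℂ} (hα : ‖α‖ = 1) (hα1 : α ≠ 1) (ha : Tendsto a L (𝓝 α))
    (hc : Tendsto c L (𝓝 α)) (hca : ∀ᶠ n in L, c n ≠ a n)
    (hden : ∀ᶠ n in L, 1 - conj (a n) * c n ≠ 0)
    (ht : Tendsto (fun n => blaschkeFactorLogDeriv (a n) (c n)) L (𝓝 t)) :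
    Tendsto (fun n => blaschkeFactor (a n) (c n)) L (𝓝 1) := by
  have hαα : conj α * α = 1 := by rw [Complex.conj_mul', hα]; simp
  have hα0 : conj α ≠ 0 := by rintro h; simp [h] at hαα
  have hconj := (Complex.continuous_conj.tendsto α).comp ha
  have hvanish : Tendsto (fun n => 1 - conj (a n) * c n) L (𝓝 0) := by
    simpa [hαα] using (tendsto_const_nhds (x := (1 : ℂ))).sub (hconj.mul hc)
  have hval : (1 - conj α) / (1 - α) / (t * 0 - conj α) = 1 := by
    rw [div_eq_one_iff_eq (by simpa using hα0), div_eq_iff (sub_ne_zero.2 hα1.symm)]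
    linear_combination -hαα
  have hlim : Tendsto (fun n => (1 - conj (a n)) / (1 - a n) /
      (blaschkeFactorLogDeriv (a n) (c n) * (1 - conj (a n) * c n) - conj (a n))) L
      (𝓝 ((1 - conj α) / (1 - α) / (t * 0 - conj α))) :=
    ((tendsto_const_nhds.sub hconj).div (tendsto_const_nhds.sub ha)
      (sub_ne_zero.2 hα1.symm)).div ((ht.mul hvanish).sub hconj) (by simpa using hα0)
  rw [hval] at hlim
  refine hlim.congr' ?_
  filter_upwards [hca, hden] with n hn hn'
  exact (blaschkeFactor_eq_div_logDeriv hn hn').symm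

lemma tendsto_blaschkeFactor_at_critical_points {ι : Type*} {L : Filter ι} {m e : ℕ}
    {A : ι → Fin e → ℂ} {q : Fin e → ℂ} {c : ι → ℂ} {k : Fin e} (hA : ∀ n j, ‖A n j‖ < 1)
    (hAq : ∀ j, Tendsto (fun n => A n j) L (𝓝 (q j))) (hq : ∀ j, ‖q j‖ ≤ 1)
    (hqk : ‖q k‖ = 1) (hqk1 : q k ≠ 1) (hsep : ∀ j ≠ k, q k ≠ q j) (hc : ∀ n, ‖c n‖ < 1)
    (hcrit : ∀ n, deriv (blaschke m (A n)) (c n) = 0) (hcq : Tendsto c L (𝓝 (q k))) :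
    Tendsto (fun n => blaschkeFactor (A n k) (c n)) L (𝓝 1) := by
  have hqk0 : q k ≠ 0 := by rintro h; simp [h] at hqk
  have hc0 : ∀ᶠ n in L, c n ≠ 0 := hcq.eventually_ne hqk0
  have hsep' : ∀ᶠ n in L, ∀ j ≠ k, c n ≠ A n j := by
    refine eventually_all.2 fun j => ?_
    rcases eq_or_ne j k with rfl | hjk
    · exact Eventually.of_forall fun _ h => absurd rfl h
    · filter_upwards [(hcq.sub (hAq j)).eventually_ne (sub_ne_zero.2 (hsep j hjk))]
        with n hn _ h
      exact hn (sub_eq_zero.2 h)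
  have hca : ∀ᶠ n in L, ∀ j, c n ≠ A n j := by
    filter_upwards [hc0, hsep'] with n h0 hj j
    rcases eq_or_ne j k with rfl | hjk
    · intro h
      rw [h] at h0 hj
      exact deriv_blaschke_ne_zero_of_simple_zero m (hA n) h0 hj (h ▸ hcrit n)
    · exact hj j hjk
  have hcrit_eq : ∀ᶠ n in L, blaschkeFactorLogDeriv (A n k) (c n) =
      -(m / c n + ∑ j ∈ univ.erase k, blaschkeFactorLogDeriv (A n j) (c n)) := by
    filter_upwards [hc0, hca] with n h0 hj
    have h := blaschke_critical_point_eq (hA n) (hc n) h0 hj (hcrit n)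
    rw [← add_sum_erase _ _ (mem_univ k)] at h
    linear_combination h
  have hlim : Tendsto
      (fun n => -(m / c n + ∑ j ∈ univ.erase k, blaschkeFactorLogDeriv (A n j) (c n))) L
      (𝓝 (-(m / q k + ∑ j ∈ univ.erase k, blaschkeFactorLogDeriv (q j) (q k)))) := by
    refine ((tendsto_const_nhds.div hcq hqk0).add (tendsto_finsetSum _ fun j hj => ?_)).neg
    have hjk := hsep j (ne_of_mem_erase hj)
    exact (hAq j).blaschkeFactorLogDeriv hcq (sub_ne_zero.2 hjk)
      (one_sub_conj_mul_ne_zero (hq j) hqk.le hjk)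
  exact tendsto_blaschkeFactor_one_of_tendsto_logDeriv hqk hqk1 (hAq k) hcq
    (hca.mono fun n h => h k)
    (Eventually.of_forall fun n => one_sub_conj_mul_ne_zero_of_norm_lt_one (hA n k) (hc n).le)
    (hlim.congr' (hcrit_eq.mono fun n h => h.symm))

lemma prod_eq_prod_castLE_of_eq_one {M : Type*} [CommMonoid M] {d e : ℕ} (h : d ≤ e)
    (g : Fin e → M) (hg : ∀ j : Fin e, d ≤ (j : ℕ) → g j = 1) :
    ∏ j, g j = ∏ i : Fin d, g (Fin.castLE h i) := by
  have hsub : ∏ j ∈ univ.map (Fin.castLEEmb h), g j = ∏ j, g j :=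
    prod_subset (subset_univ _) fun j _ hj => hg j <| by
      by_contra hjd
      exact hj (mem_map.2 ⟨⟨j, by omega⟩, mem_univ _, rfl⟩)
  rw [← hsub, prod_map]
  rfl

lemma tendsto_blaschke_of_tendsto_factors {ι : Type*} {L : Filter ι} {m d e : ℕ} (hd : d ≤ e)
    {A : ι → Fin e → ℂ} {q : Fin e → ℂ} {z : ι → ℂ} {w : ℂ} (hz : Tendsto z L (𝓝 w))
    (hin : ∀ j : Fin e, (j : ℕ) < d →
      Tendsto (fun n => blaschkeFactor (A n j) (z n)) L (𝓝 (blaschkeFactor (q j) w)))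
    (hout : ∀ j : Fin e, d ≤ (j : ℕ) →
      Tendsto (fun n => blaschkeFactor (A n j) (z n)) L (𝓝 1)) :
    Tendsto (fun n => blaschke m (A n) (z n)) L
      (𝓝 (blaschke m (fun i : Fin d => q (Fin.castLE hd i)) w)) := by
  classical
  let g : Fin e → ℂ := fun j => if (j : ℕ) < d then blaschkeFactor (q j) w else 1
  have hg : ∏ j, g j = ∏ i : Fin d, blaschkeFactor (q (Fin.castLE hd i)) w := by
    rw [prod_eq_prod_castLE_of_eq_one hd g fun j hj => if_neg (by omega)]
    exact prod_congr rfl fun i _ => if_pos i.isLt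
  have hfac : ∀ j ∈ univ, Tendsto (fun n => blaschkeFactor (A n j) (z n)) L (𝓝 (g j)) := by
    intro j _
    by_cases hj : (j : ℕ) < d
    · simpa [g, hj] using hin j hj
    · simpa [g, hj] using hout j (by omega)
  simpa only [blaschke_eq_mul_prod, hg] using (hz.pow m).mul (tendsto_finsetProd _ hfac)

theorem stmt12_general (m e d₁ : ℕ) (hd : d₁ < e)
    (q : Fin e → ℂ)
    (hqin : ∀ k : Fin e, (k : ℕ) < d₁ → ‖q k‖ < 1)
    (hqbd : ∀ k : Fin e, d₁ ≤ (k : ℕ) → ‖q k‖ = 1)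
    (A : ℕ → Fin e → ℂ)
    (hA : ∀ n k, ‖A n k‖ < 1)
    (hAconv : ∀ k, Tendsto (fun n => A n k) atTop (nhds (q k)))
    (hdist : ∀ k k' : Fin e, d₁ ≤ (k : ℕ) → d₁ ≤ (k' : ℕ) → q k = q k' → k = k')
    (hq1 : ∀ k : Fin e, d₁ ≤ (k : ℕ) → q k ≠ 1)
    (k : Fin e) (hk : d₁ ≤ (k : ℕ))
    (l : ℕ)
    (hlavoid : ∀ j : ℕ, 1 ≤ j → j ≤ l - 1 → ∀ k' : Fin e, d₁ ≤ (k' : ℕ) →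
      (blaschke m fun i : Fin d₁ => q (Fin.castLE hd.le i))^[j] (q k) ≠ q k')
    (c : ℕ → ℂ) (hc : ∀ n, ‖c n‖ < 1)
    (hcrit : ∀ n, deriv (blaschke m (A n)) (c n) = 0)
    (hclim : Tendsto c atTop (nhds (q k))) :
    Tendsto (fun n => (blaschke m (A n))^[l] (c n)) atTop
      (nhds ((blaschke m fun i : Fin d₁ => q (Fin.castLE hd.le i))^[l] (q k))) := by
  set B := blaschke m fun i : Fin d₁ => q (Fin.castLE hd.le i)
  have hq : ∀ j, ‖q j‖ ≤ 1 ∧ q j ≠ 1 := fun j =>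
    if hj : (j : ℕ) < d₁ then ⟨(hqin j hj).le, fun h => by simpa [h] using hqin j hj⟩
    else ⟨(hqbd j (by omega)).le, hq1 j (by omega)⟩
  have hin_ne : ∀ w : ℂ, ‖w‖ = 1 → ∀ j : Fin e, (j : ℕ) < d₁ → w ≠ q j :=
    fun w hw j hj h => by simpa [← h, hw] using hqin j hj
  have hfac : ∀ (z : ℕ → ℂ) (w : ℂ) (j : Fin e), Tendsto z atTop (𝓝 w) → ‖w‖ = 1 → w ≠ q j →
      Tendsto (fun n => blaschkeFactor (A n j) (z n)) atTop (𝓝 (blaschkeFactor (q j) w)) :=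
    fun z w j hz hw hwq => (hAconv j).blaschkeFactor hz (sub_ne_zero.2 (hq j).2.symm)
      (one_sub_conj_mul_ne_zero (hq j).1 hw.le hwq)
  have hstep : ∀ (z : ℕ → ℂ) (w : ℂ), Tendsto z atTop (𝓝 w) → ‖w‖ = 1 →
      (∀ j : Fin e, d₁ ≤ (j : ℕ) → w ≠ q j) →
      Tendsto (fun n => blaschke m (A n) (z n)) atTop (𝓝 (B w)) :=
    fun z w hz hw hwq => tendsto_blaschke_of_tendsto_factors hd.le hz
      (fun j hj => hfac z w j hz hw (hin_ne w hw j hj))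
      fun j hj => blaschkeFactor_eq_one (hqbd j hj) (hq1 j hj) (hwq j hj) ▸
        hfac z w j hz hw (hwq j hj)
  have hqk := hqbd k hk
  have hsep : ∀ j ≠ k, q k ≠ q j := fun j hjk h =>
    if hj : (j : ℕ) < d₁ then hin_ne _ hqk j hj h
    else hjk (hdist k j hk (by omega) h).symm
  have hfirst : Tendsto (fun n => blaschke m (A n) (c n)) atTop (𝓝 (B (q k))) := by
    refine tendsto_blaschke_of_tendsto_factors hd.le hclim
      (fun j hj => hfac c _ j hclim hqk (hin_ne _ hqk j hj)) fun j hj => ?_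
    rcases eq_or_ne j k with rfl | hjk
    · exact tendsto_blaschkeFactor_at_critical_points hA hAconv (fun j => (hq j).1) hqk
        (hq1 j hk) hsep hc hcrit hclim
    · exact blaschkeFactor_eq_one (hqbd j hj) (hq1 j hj) (hsep j hjk) ▸
        hfac c _ j hclim hqk (hsep j hjk)
  have hcircle : ∀ j, ‖B^[j] (q k)‖ = 1 := fun j => by
    simpa using (mapsTo_blaschke_sphere m fun i => hqin _ (by simp)).iterate j
      (show q k ∈ Metric.sphere 0 1 by simpa using hqk)
  suffices ∀ j ≤ l, Tendsto (fun n => (blaschke m (A n))^[j] (c n)) atTop (𝓝 (B^[j] (q k))) from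
    this l le_rfl
  intro j hj
  induction j with
  | zero => simpa using hclim
  | succ j ih =>
    rcases Nat.eq_zero_or_pos j with rfl | hj0
    · simpa using hfirst
    · simp only [Function.iterate_succ_apply']
      exact hstep _ _ (ih (by omega)) (hcircle j) (hlavoid j hj0 (by omega))

/-- In the degenerating setup, assume the boundary points `q k` (for
`d₁ ≤ k`) are pairwise distinct and none equals `1`. Fix a boundary index `k` and write
`q = q k`. Let `l ≥ 1` be such that `B^j(q)` avoids all boundary points for
`1 ≤ j ≤ l − 1`. If `(c n)` is a sequence in `𝔻` with `(B n)'(c n) = 0` and `c n → q`,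
then `(B n)^l (c n) → B^l(q)`. -/
theorem stmt12 (m e d₁ : ℕ) (hm : 1 ≤ m) (he : 1 ≤ e) (hd : d₁ < e)
    (q : Fin e → ℂ)
    (hqin : ∀ k : Fin e, (k : ℕ) < d₁ → ‖q k‖ < 1)
    (hqbd : ∀ k : Fin e, d₁ ≤ (k : ℕ) → ‖q k‖ = 1)
    (A : ℕ → Fin e → ℂ)
    (hA : ∀ n k, ‖A n k‖ < 1)
    (hAconv : ∀ k, Tendsto (fun n => A n k) atTop (nhds (q k)))
    (hdist : ∀ k k' : Fin e, d₁ ≤ (k : ℕ) → d₁ ≤ (k' : ℕ) → q k = q k' → k = k')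
    (hq1 : ∀ k : Fin e, d₁ ≤ (k : ℕ) → q k ≠ 1)
    (k : Fin e) (hk : d₁ ≤ (k : ℕ))
    (l : ℕ) (hl : 1 ≤ l)
    (hlavoid : ∀ j : ℕ, 1 ≤ j → j ≤ l - 1 → ∀ k' : Fin e, d₁ ≤ (k' : ℕ) →
      (blaschke m fun i : Fin d₁ => q (Fin.castLE hd.le i))^[j] (q k) ≠ q k')
    (c : ℕ → ℂ) (hc : ∀ n, ‖c n‖ < 1)
    (hcrit : ∀ n, deriv (blaschke m (A n)) (c n) = 0)
    (hclim : Tendsto c atTop (nhds (q k))) :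
    Tendsto (fun n => (blaschke m (A n))^[l] (c n)) atTop
      (nhds ((blaschke m fun i : Fin d₁ => q (Fin.castLE hd.le i))^[l] (q k))) :=
  stmt12_general m e d₁ hd q hqin hqbd A hA hAconv hdist hq1 k hk l hlavoid c hc hcrit hclim
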